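/- arXiv:2111.03907 — 3 statements merged into one kernel-verified Lean document; each statement's English description precedes it below -/
import Mathlib

section
/- Suppose that for fixed a, a' ∈ {0,1}, λ ∈ ℝ and ρ ∈ (−1,1) the following hold: (i) (Z₀, Z₁) is a bivariate Gaussian vector with mean zero, unit variances and correlation ρ, independent of X; (ii) [SI2A] for each ã ∈ {0,1}, M(ã) = F_M⁻(Φ(Z_ã) | ã, X) almost surely, where Φ is the standard normal CDF; (iii) [SI2B, substituted form] E[ Y{a, M(a')} | Z₀, Z₁, X ] = expit( logit r_y(M(a'), a, X) + λ(M(a) − M(a')) ) almost surely, where r_y takes values in (0,1), expit(t) = eᵗ/(1+eᵗ) and logit is its inverse. Then E[ Y{a, M(a')} ] = ∫_𝒳 ∫_ℝ ∫_ℝ expit( logit r_y(m'(z₀,z₁,x), a, x) + λ( m(z₀,z₁,x) − m'(z₀,z₁,x) ) ) φ_Σ(z₀, z₁) dz₀ dz₁ F_X(dx), where m(z₀,z₁,x) = F_M⁻(Φ(z_a) | a, x), m'(z₀,z₁,x) = F_M⁻(Φ(z_{a'}) | a', x), Σ is the 2×2 matrix with unit diagonal and off-diagonal entries ρ, and φ_Σ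 is the density of the centered bivariate Gaussian with covariance Σ. -/
open MeasureTheory ProbabilityTheory
open scoped ENNReal

/-!
By the tower property and SI2B, `E[Y{a, M(a')}]` is the mean of the logit-scale expression in
`M(a)`, `M(a')`, `X`; by SI2A this expression is `G ((Z₀, Z₁), X)` for a fixed measurable `G`.
Independence of `(Z₀, Z₁)` and `X` turns the law of `((Z₀, Z₁), X)` into a product measure, so
Fubini gives `∫ (∫ G z x d law(Z₀, Z₁)(z)) dF_X(x)`, and the inner integral is an integral against
the density `φ_Σ`. All integrability comes for free since `G` takes values in `(0, 1)`.
-/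

/-- The logistic (expit) function `t ↦ eᵗ/(1+eᵗ)`. -/
noncomputable def expit (t : ℝ) : ℝ := Real.exp t / (1 + Real.exp t)

/-- The logit function, inverse of `expit` on `(0,1)`. -/
noncomputable def logit (p : ℝ) : ℝ := Real.log (p / (1 - p))

/-- Standard normal cumulative distribution function `Φ`. -/
noncomputable def stdNormalCdf (z : ℝ) : ℝ := ((gaussianReal 0 1) (Set.Iic z)).toReal

/-- Density `φ_Σ` of the centered bivariate Gaussian with unit variances and
correlation `ρ`, i.e. covariance matrix `Σ` with unit diagonal and off-diagonal `ρ`. -/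
noncomputable def biGaussDensity (ρ z₀ z₁ : ℝ) : ℝ :=
  (2 * Real.pi * Real.sqrt (1 - ρ ^ 2))⁻¹ *
    Real.exp (-(z₀ ^ 2 - 2 * ρ * z₀ * z₁ + z₁ ^ 2) / (2 * (1 - ρ ^ 2)))

lemma expit_eq_sigmoid : expit = Real.sigmoid := by
  funext t
  rw [expit, Real.sigmoid_def, Real.exp_neg]
  field_simp
  ring

lemma norm_expit_le_one (t : ℝ) : ‖expit t‖ ≤ 1 := by
  rw [expit_eq_sigmoid, Real.norm_of_nonneg (Real.sigmoid_nonneg t)]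
  exact Real.sigmoid_le_one t

lemma measurable_expit : Measurable expit :=
  expit_eq_sigmoid ▸ continuous_sigmoid.measurable

lemma measurable_logit : Measurable logit := by
  unfold logit
  fun_prop

lemma monotone_stdNormalCdf : Monotone stdNormalCdf := fun _ _ hst =>
  ENNReal.toReal_mono (measure_ne_top _ _) (measure_mono (Set.Iic_subset_Iic.mpr hst))

lemma measurable_stdNormalCdf : Measurable stdNormalCdf :=
  monotone_stdNormalCdf.measurable

lemma biGaussDensity_nonneg (ρ z₀ z₁ : ℝ) : 0 ≤ biGaussDensity ρ z₀ z₁ := by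
  unfold biGaussDensity
  positivity

lemma measurable_biGaussDensity (ρ : ℝ) :
    Measurable fun z : ℝ × ℝ => biGaussDensity ρ z.1 z.2 := by
  unfold biGaussDensity
  fun_prop

theorem ProbabilityTheory.IndepFun.integral_comp_eq_integral_integral {Ω α β E : Type*}
    [MeasurableSpace Ω] [MeasurableSpace α] [MeasurableSpace β] [NormedAddCommGroup E]
    [NormedSpace ℝ E]
    {P : Measure Ω} [IsFiniteMeasure P] {U : Ω → α} {V : Ω → β} (hUV : IndepFun U V P)
    (hU : AEMeasurable U P) (hV : AEMeasurable V P) {g : α → β → E}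
    (hg : Integrable (Function.uncurry g) ((P.map U).prod (P.map V))) :
    ∫ ω, g (U ω) (V ω) ∂P = ∫ v, ∫ u, g u v ∂(P.map U) ∂(P.map V) := by
  have hlaw := (indepFun_iff_map_prod_eq_prod_map_map hU hV).mp hUV
  calc ∫ ω, g (U ω) (V ω) ∂P
      = ∫ p, Function.uncurry g p ∂(P.map fun ω => (U ω, V ω)) :=
        (integral_map (hU.prodMk hV) (hlaw ▸ hg.aestronglyMeasurable)).symm
    _ = ∫ v, ∫ u, g u v ∂(P.map U) ∂(P.map V) := by
        rw [hlaw]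
        exact integral_prod_symm _ hg

theorem integral_prod_withDensity_ofReal_eq_integral_integral_mul {α β : Type*}
    [MeasurableSpace α] [MeasurableSpace β] {μ : Measure α} {ν : Measure β} [SFinite μ]
    [SFinite ν] {f g : α × β → ℝ} (hf : Measurable f) (hf0 : ∀ z, 0 ≤ f z)
    (hg : Integrable g ((μ.prod ν).withDensity fun z => ENNReal.ofReal (f z))) :
    ∫ z, g z ∂(μ.prod ν).withDensity (fun z => ENNReal.ofReal (f z)) =
      ∫ y, ∫ x, g (x, y) * f (x, y) ∂μ ∂ν := by
  have hf' : Measurable fun z => ENNReal.ofReal (f z) := hf.ennreal_ofReal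
  have hfin : ∀ᵐ z ∂(μ.prod ν), ENNReal.ofReal (f z) < ∞ :=
    ae_of_all _ fun _ => ENNReal.ofReal_lt_top
  have hsmul : (fun z => (ENNReal.ofReal (f z)).toReal • g z) = fun z => g z * f z := by
    funext z
    rw [ENNReal.toReal_ofReal (hf0 z), smul_eq_mul, mul_comm]
  rw [integrable_withDensity_iff_integrable_smul' hf' hfin, hsmul] at hg
  rw [integral_withDensity_eq_integral_toReal_smul hf' hfin, hsmul]
  exact integral_prod_symm _ hg

section Identification

variable {𝒳 : Type*}

/-- The paper's `m(z₀, z₁, x)` for treatment level `i`: the mediator that SI2A attaches to the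
copula variable `z_i`. -/
noncomputable def copulaMediator (FMinv : ℝ → Fin 2 → 𝒳 → ℝ) (i : Fin 2) (z : ℝ × ℝ) (x : 𝒳) :
    ℝ :=
  FMinv (stdNormalCdf (![z.1, z.2] i)) i x

noncomputable def logitSensitivityIntegrand (r_y FMinv : ℝ → Fin 2 → 𝒳 → ℝ) (a a' : Fin 2)
    (l : ℝ) (z : ℝ × ℝ) (x : 𝒳) : ℝ :=
  expit (logit (r_y (copulaMediator FMinv a' z x) a x)
    + l * (copulaMediator FMinv a z x - copulaMediator FMinv a' z x))

lemma copulaMediator_pair (FMinv : ℝ → Fin 2 → 𝒳 → ℝ) (i : Fin 2) (z : Fin 2 → ℝ) (x : 𝒳) :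
    copulaMediator FMinv i (z 0, z 1) x = FMinv (stdNormalCdf (z i)) i x := by
  fin_cases i <;> rfl

lemma measurable_copulaMediator [MeasurableSpace 𝒳] {FMinv : ℝ → Fin 2 → 𝒳 → ℝ}
    (hFMinv : Measurable fun p : ℝ × Fin 2 × 𝒳 => FMinv p.1 p.2.1 p.2.2) (i : Fin 2) :
    Measurable fun q : (ℝ × ℝ) × 𝒳 => copulaMediator FMinv i q.1 q.2 := by
  have hzi : Measurable fun q : (ℝ × ℝ) × 𝒳 => ![q.1.1, q.1.2] i := by
    fin_cases i
    · exact measurable_fst.fst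
    · exact measurable_fst.snd
  exact hFMinv.comp ((measurable_stdNormalCdf.comp hzi).prodMk
    (measurable_const.prodMk measurable_snd))

lemma measurable_logitSensitivityIntegrand [MeasurableSpace 𝒳] {r_y FMinv : ℝ → Fin 2 → 𝒳 → ℝ}
    (hr_y : Measurable fun p : ℝ × Fin 2 × 𝒳 => r_y p.1 p.2.1 p.2.2)
    (hFMinv : Measurable fun p : ℝ × Fin 2 × 𝒳 => FMinv p.1 p.2.1 p.2.2) (a a' : Fin 2) (l : ℝ) :
    Measurable fun q : (ℝ × ℝ) × 𝒳 => logitSensitivityIntegrand r_y FMinv a a' l q.1 q.2 := by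
  have hm := measurable_copulaMediator hFMinv
  refine measurable_expit.comp (.add ?_ (measurable_const.mul ((hm a).sub (hm a'))))
  exact measurable_logit.comp
    (hr_y.comp ((hm a').prodMk (measurable_const.prodMk measurable_snd)))

lemma integrable_logitSensitivityIntegrand_comp [MeasurableSpace 𝒳] {β : Type*}
    [MeasurableSpace β] {μ : Measure β} [IsFiniteMeasure μ] {r_y FMinv : ℝ → Fin 2 → 𝒳 → ℝ}
    (hr_y : Measurable fun p : ℝ × Fin 2 × 𝒳 => r_y p.1 p.2.1 p.2.2)
    (hFMinv : Measurable fun p : ℝ × Fin 2 × 𝒳 => FMinv p.1 p.2.1 p.2.2) (a a' : Fin 2) (l : ℝ)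
    {q : β → (ℝ × ℝ) × 𝒳} (hq : Measurable q) :
    Integrable (fun b => logitSensitivityIntegrand r_y FMinv a a' l (q b).1 (q b).2) μ := by
  have hG := measurable_logitSensitivityIntegrand hr_y hFMinv a a' l
  exact .of_bound (hG.comp hq).aestronglyMeasurable 1 (ae_of_all _ fun _ => norm_expit_le_one _)

end Identification

theorem zoib_logit_sensitivity_identification_general
    {Ω 𝒳 : Type*} [MeasurableSpace Ω] [MeasurableSpace 𝒳]
    (P : Measure Ω) [IsProbabilityMeasure P]
    (X : Ω → 𝒳) (hX : Measurable X)
    (Z : Fin 2 → Ω → ℝ) (hZ : ∀ i, Measurable (Z i))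
    (M : Fin 2 → Ω → ℝ)
    (Y : Fin 2 → ℝ → Ω → ℝ)
    (r_y : ℝ → Fin 2 → 𝒳 → ℝ)
    (hr_meas : Measurable (fun p : ℝ × Fin 2 × 𝒳 => r_y p.1 p.2.1 p.2.2))
    (FMinv : ℝ → Fin 2 → 𝒳 → ℝ)
    (hFMinv_meas : Measurable (fun p : ℝ × Fin 2 × 𝒳 => FMinv p.1 p.2.1 p.2.2))
    (a a' : Fin 2) (l ρ : ℝ)
    -- (i): (Z₀, Z₁) is bivariate Gaussian, mean zero, unit variances, correlation ρ,
    -- independent of X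
    (hZlaw : P.map (fun ω => (Z 0 ω, Z 1 ω)) =
      (volume : Measure (ℝ × ℝ)).withDensity
        (fun z : ℝ × ℝ => ENNReal.ofReal (biGaussDensity ρ z.1 z.2)))
    (hindep : IndepFun (fun ω => (Z 0 ω, Z 1 ω)) X P)
    -- (ii): SI2A, M(ã) = F_M⁻(Φ(Z_ã) | ã, X) almost surely
    (hSI2A : ∀ i : Fin 2, ∀ᵐ ω ∂P, M i ω = FMinv (stdNormalCdf (Z i ω)) i (X ω))
    -- (iii): SI2B, substituted form
    (hSI2B :
      P[fun ω => Y a (M a' ω) ω |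
          MeasurableSpace.comap (fun ω => (Z 0 ω, Z 1 ω, X ω)) inferInstance]
        =ᵐ[P] fun ω =>
          expit (logit (r_y (M a' ω) a (X ω)) + l * (M a ω - M a' ω))) :
    ∫ ω, Y a (M a' ω) ω ∂P =
      ∫ x, (∫ z₁, ∫ z₀,
          expit (logit (r_y (FMinv (stdNormalCdf (![z₀, z₁] a')) a' x) a x)
              + l * (FMinv (stdNormalCdf (![z₀, z₁] a)) a x
                  - FMinv (stdNormalCdf (![z₀, z₁] a')) a' x))
            * biGaussDensity ρ z₀ z₁) ∂(P.map X) := by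
  set G := logitSensitivityIntegrand r_y FMinv a a' l
  have hZpair : Measurable fun ω => (Z 0 ω, Z 1 ω) := (hZ 0).prodMk (hZ 1)
  have hSI2A_G : (fun ω => expit (logit (r_y (M a' ω) a (X ω)) + l * (M a ω - M a' ω)))
      =ᵐ[P] fun ω => G (Z 0 ω, Z 1 ω) (X ω) := by
    filter_upwards [hSI2A a, hSI2A a'] with ω ha ha'
    simp only [G, logitSensitivityIntegrand]
    rw [copulaMediator_pair FMinv a (Z · ω),
      copulaMediator_pair FMinv a' (Z · ω), ha, ha']
  calc ∫ ω, Y a (M a' ω) ω ∂P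
      = ∫ ω, G (Z 0 ω, Z 1 ω) (X ω) ∂P := by
        rw [← integral_condExp ((hZ 0).prodMk ((hZ 1).prodMk hX)).comap_le]
        exact integral_congr_ae (hSI2B.trans hSI2A_G)
    _ = ∫ x, ∫ z, G z x ∂(P.map fun ω => (Z 0 ω, Z 1 ω)) ∂(P.map X) :=
        hindep.integral_comp_eq_integral_integral hZpair.aemeasurable hX.aemeasurable
          (integrable_logitSensitivityIntegrand_comp hr_meas hFMinv_meas a a' l measurable_id)
    _ = _ := integral_congr_ae <| ae_of_all _ fun x => by
        have hG : Integrable (fun z => G z x) (P.map fun ω => (Z 0 ω, Z 1 ω)) :=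
          integrable_logitSensitivityIntegrand_comp hr_meas hFMinv_meas a a' l
            (q := fun z => (z, x)) (measurable_id.prodMk measurable_const)
        rw [hZlaw, Measure.volume_eq_prod] at hG ⊢
        exact integral_prod_withDensity_ofReal_eq_integral_integral_mul
          (measurable_biGaussDensity ρ) (fun z => biGaussDensity_nonneg ρ z.1 z.2) hG

/-- Proposition 1, logit-scale sensitivity identification.
Under (i) a Gaussian copula for `(Z₀, Z₁)` independent of `X`, (ii) SI2A,
and (iii) SI2B in substituted form, the mean of the counterfactual
`Y{a, M(a')}` is identified by the triple integral. -/
theorem zoib_logit_sensitivity_identification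
    {Ω 𝒳 : Type*} [MeasurableSpace Ω] [MeasurableSpace 𝒳] [StandardBorelSpace 𝒳]
    (P : Measure Ω) [IsProbabilityMeasure P]
    (X : Ω → 𝒳) (hX : Measurable X)
    (Z : Fin 2 → Ω → ℝ) (hZ : ∀ i, Measurable (Z i))
    (M : Fin 2 → Ω → ℝ) (hM : ∀ i, Measurable (M i))
    (hMrange : ∀ i ω, M i ω ∈ Set.Icc (0 : ℝ) 1)
    (Y : Fin 2 → ℝ → Ω → ℝ)
    (hYmeas : ∀ i, Measurable (fun p : ℝ × Ω => Y i p.1 p.2))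
    (hYrange : ∀ i m ω, Y i m ω ∈ Set.Icc (0 : ℝ) 1)
    (r_y : ℝ → Fin 2 → 𝒳 → ℝ)
    (hr_meas : Measurable (fun p : ℝ × Fin 2 × 𝒳 => r_y p.1 p.2.1 p.2.2))
    (hr_range : ∀ m i x, r_y m i x ∈ Set.Ioo (0 : ℝ) 1)
    (FMinv : ℝ → Fin 2 → 𝒳 → ℝ)
    (hFMinv_meas : Measurable (fun p : ℝ × Fin 2 × 𝒳 => FMinv p.1 p.2.1 p.2.2))
    (a a' : Fin 2) (l ρ : ℝ) (hρ : ρ ∈ Set.Ioo (-1 : ℝ) 1)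
    -- (i): (Z₀, Z₁) is bivariate Gaussian, mean zero, unit variances, correlation ρ,
    -- independent of X
    (hZlaw : P.map (fun ω => (Z 0 ω, Z 1 ω)) =
      (volume : Measure (ℝ × ℝ)).withDensity
        (fun z : ℝ × ℝ => ENNReal.ofReal (biGaussDensity ρ z.1 z.2)))
    (hindep : IndepFun (fun ω => (Z 0 ω, Z 1 ω)) X P)
    -- (ii): SI2A, M(ã) = F_M⁻(Φ(Z_ã) | ã, X) almost surely
    (hSI2A : ∀ i : Fin 2, ∀ᵐ ω ∂P, M i ω = FMinv (stdNormalCdf (Z i ω)) i (X ω))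
    -- (iii): SI2B, substituted form
    (hSI2B :
      P[fun ω => Y a (M a' ω) ω |
          MeasurableSpace.comap (fun ω => (Z 0 ω, Z 1 ω, X ω)) inferInstance]
        =ᵐ[P] fun ω =>
          expit (logit (r_y (M a' ω) a (X ω)) + l * (M a ω - M a' ω))) :
    ∫ ω, Y a (M a' ω) ω ∂P =
      ∫ x, (∫ z₁, ∫ z₀,
          expit (logit (r_y (FMinv (stdNormalCdf (![z₀, z₁] a')) a' x) a x)
              + l * (FMinv (stdNormalCdf (![z₀, z₁] a)) a x
                  - FMinv (stdNormalCdf (![z₀, z₁] a')) a' x))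
            * biGaussDensity ρ z₀ z₁) ∂(P.map X) :=
  zoib_logit_sensitivity_identification_general P X hX Z hZ M Y r_y hr_meas FMinv hFMinv_meas a a' l
    ρ hZlaw hindep hSI2A hSI2B
end

section
/- Fix a, a' ∈ {0,1} and λ ∈ ℝ, and suppose: (i) [SI2C, substituted form] E[ Y{a, M(a')} | M(0), M(1), X ] = r_y(M(a'), a, X) + λ( M(a) − M(a') ) almost surely; (ii) [SI1] M(a') is conditionally independent of A given X; (iii) consistency M = M(A); (iv) [SI3] P(A = a' | X) > 0 almost surely. Then E[ Y{a, M(a')} ] = ∫_𝒳 ∫_{[0,1]} r_y(m, a, x) f_M(m | a', x) ν_M(dm) F_X(dx) + λ( E[M(a)] − E[M(a')] ). -/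
open MeasureTheory ProbabilityTheory

/-!
By the tower property and SI2C, `E[Y{a, M(a')}] = E[r_y(M(a'), a, X)] + λ (E[M(a)] - E[M(a')])`.
For the remaining term let `Z = E[r_y(M(a'), a, X) | X]`. Conditional independence of `M(a')`
and `A` given `X` gives `E[r_y(M(a'), a, X) | A, X] = Z`, while on `{A = a'}` consistency turns
the left side into the observed regression `h(X) = ∫ r_y(m, a, X) f_M(m | a', X) ν_M(dm)`.
So the `σ(X)`-event `{Z ≠ h(X)}` meets `{A = a'}` in a null set; since `P(A = a' | X) > 0`,
it is itself null, and `E[r_y(M(a'), a, X)] = E[Z] = ∫ h dF_X`.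
-/

theorem condExp_comap_prodMk_ae_eq_of_condIndepFun
    {Ω β γ δ : Type*} {mΩ : MeasurableSpace Ω} [StandardBorelSpace Ω]
    [MeasurableSpace β] [StandardBorelSpace β] [Nonempty β]
    [MeasurableSpace γ] [StandardBorelSpace γ] [Nonempty γ] [MeasurableSpace δ]
    {μ : Measure Ω} [IsFiniteMeasure μ] {f : Ω → β} {g : Ω → γ} {k : Ω → δ}
    (hf : Measurable f) (hg : Measurable g) (hk : Measurable k) (hfg : f ⟂ᵢ[k, hk; μ] g)
    {φ : δ × β → ℝ} (hφ : StronglyMeasurable φ)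
    (hφ_int : Integrable (fun ω => φ (k ω, f ω)) μ) :
    μ[fun ω => φ (k ω, f ω) | MeasurableSpace.comap (fun ω => (k ω, g ω)) inferInstance]
      =ᵐ[μ] μ[fun ω => φ (k ω, f ω) | MeasurableSpace.comap k inferInstance] := by
  have hkg : Measurable fun ω => (k ω, g ω) := hk.prodMk hg
  have h_kg := condExp_prod_ae_eq_integral_condDistrib hkg hf.aemeasurable
    (f := fun p : (δ × γ) × β => φ (p.1.1, p.2))
    (hφ.comp_measurable ((measurable_fst.comp measurable_fst).prodMk measurable_snd)) hφ_int
  have h_k := condExp_prod_ae_eq_integral_condDistrib hk hf.aemeasurable hφ hφ_int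
  have h_ker := ae_of_ae_map hkg.aemeasurable
    ((condIndepFun_iff_condDistrib_prod_ae_eq_prodMkRight hf hg hk).mp hfg.symm)
  filter_upwards [h_kg, h_k, h_ker] with ω h_kg h_k h_ker
  rw [h_kg, h_k, h_ker, Kernel.prodMkRight_apply]

theorem measure_eq_zero_of_measure_inter_eq_zero_of_condExp_pos
    {Ω : Type*} {m m0 : MeasurableSpace Ω} {μ : Measure[m0] Ω} [IsFiniteMeasure μ]
    (hm : m ≤ m0) {s t : Set Ω} (hs : MeasurableSet[m0] s) (ht : MeasurableSet[m] t)
    (hst : μ (t ∩ s) = 0) (hpos : ∀ᵐ ω ∂μ, 0 < μ[s.indicator (fun _ => (1 : ℝ)) | m] ω) :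
    μ t = 0 := by
  have h_int : ∫ ω in t, μ[s.indicator (fun _ => (1 : ℝ)) | m] ω ∂μ = 0 := by
    rw [setIntegral_condExp hm ((integrable_const 1).indicator hs) ht,
      setIntegral_indicator hs, setIntegral_const, measureReal_def, hst, ENNReal.toReal_zero,
      zero_smul]
  have h_zero := (setIntegral_eq_zero_iff_of_nonneg_ae
    (ae_restrict_of_ae (hpos.mono fun ω h => h.le)) integrable_condExp.integrableOn).mp h_int
  have h_false : ∀ᵐ ω ∂μ.restrict t, False := by
    filter_upwards [h_zero, ae_restrict_of_ae hpos] with ω h_zero hpos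
    exact hpos.ne' h_zero
  rwa [Filter.eventually_false_iff_eq_bot, ae_eq_bot, Measure.restrict_eq_zero] at h_false

theorem ae_eq_of_indicator_ae_eq_of_condExp_pos
    {Ω E : Type*} [TopologicalSpace E] [TopologicalSpace.MetrizableSpace E] [Zero E]
    {m m0 : MeasurableSpace Ω} {μ : Measure[m0] Ω} [IsFiniteMeasure μ]
    (hm : m ≤ m0) {s : Set Ω} (hs : MeasurableSet[m0] s) {f g : Ω → E}
    (hf : StronglyMeasurable[m] f) (hg : StronglyMeasurable[m] g)
    (hfg : s.indicator f =ᵐ[μ] s.indicator g)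
    (hpos : ∀ᵐ ω ∂μ, 0 < μ[s.indicator (fun _ => (1 : ℝ)) | m] ω) : f =ᵐ[μ] g := by
  refine ae_iff.mpr (measure_eq_zero_of_measure_inter_eq_zero_of_condExp_pos hm hs
    (hf.measurableSet_eq_fun hg).compl ?_ hpos)
  refine measure_eq_zero_iff_ae_notMem.mpr ?_
  filter_upwards [hfg] with ω hω ⟨hne, hmem⟩
  rw [Set.indicator_of_mem hmem, Set.indicator_of_mem hmem] at hω
  exact hne hω

theorem indicator_condExp_ae_eq_of_eqOn
    {Ω E : Type*} [NormedAddCommGroup E] [NormedSpace ℝ E] [CompleteSpace E]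
    {m m0 : MeasurableSpace Ω} {μ : Measure[m0] Ω} {s : Set Ω} (hs : MeasurableSet[m] s)
    {f g : Ω → E} (hf : Integrable f μ) (hg : Integrable g μ) (hfg : Set.EqOn f g s) :
    s.indicator (μ[f | m]) =ᵐ[μ] s.indicator (μ[g | m]) :=
  calc s.indicator (μ[f | m]) =ᵐ[μ] μ[s.indicator f | m] := (condExp_indicator hf hs).symm
    _ = μ[s.indicator g | m] := by rw [Set.indicator_congr hfg]
    _ =ᵐ[μ] s.indicator (μ[g | m]) := condExp_indicator hg hs

theorem integral_comp_eq_integral_map_of_condIndepFun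
    {Ω 𝒳 α β : Type*} {mΩ : MeasurableSpace Ω} [StandardBorelSpace Ω] [MeasurableSpace 𝒳]
    [MeasurableSpace α] [StandardBorelSpace α] [Nonempty α]
    [MeasurableSpace β] [StandardBorelSpace β] [Nonempty β]
    {P : Measure Ω} [IsFiniteMeasure P] {X : Ω → 𝒳} {A : Ω → α} {M M' : Ω → β}
    (hX : Measurable X) (hA : Measurable A) (hM' : Measurable M') {a' : α}
    (hcons : ∀ ω, A ω = a' → M ω = M' ω) (hCI : M' ⟂ᵢ[X, hX; P] A)
    (hpos : ∀ᵐ ω ∂P, 0 < P[(A ⁻¹' {a'}).indicator (fun _ => (1 : ℝ)) |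
      MeasurableSpace.comap X inferInstance] ω)
    {φ : 𝒳 × β → ℝ} (hφ : StronglyMeasurable φ)
    (hφM : Integrable (fun ω => φ (X ω, M ω)) P) (hφM' : Integrable (fun ω => φ (X ω, M' ω)) P)
    {h : 𝒳 → ℝ} (hh : Measurable h)
    (hobs : ∀ᵐ ω ∂P, A ω = a' → P[fun ω => φ (X ω, M ω) |
      MeasurableSpace.comap (fun ω => (A ω, X ω)) inferInstance] ω = h (X ω)) :
    ∫ ω, φ (X ω, M' ω) ∂P = ∫ x, h x ∂(P.map X) := by
  set s := A ⁻¹' {a'}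
  set Z := P[fun ω => φ (X ω, M' ω) | MeasurableSpace.comap X inferInstance]
  have hσ : MeasurableSpace.comap (fun ω => (A ω, X ω)) inferInstance
      = MeasurableSpace.comap (fun ω => (X ω, A ω)) inferInstance :=
    (MeasurableSpace.comap_prodMk A X).trans
      ((sup_comm _ _).trans (MeasurableSpace.comap_prodMk X A).symm)
  have hs : MeasurableSet[MeasurableSpace.comap (fun ω => (A ω, X ω)) inferInstance] s :=
    (measurable_fst.comp (comap_measurable _)) (measurableSet_singleton a')
  have hCI_exp : P[fun ω => φ (X ω, M' ω) |
      MeasurableSpace.comap (fun ω => (A ω, X ω)) inferInstance] =ᵐ[P] Z :=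
    hσ ▸ condExp_comap_prodMk_ae_eq_of_condIndepFun hM' hA hX hCI hφ hφM'
  have h_on_s : s.indicator Z =ᵐ[P] s.indicator (fun ω => h (X ω)) :=
    calc s.indicator Z =ᵐ[P] s.indicator (P[fun ω => φ (X ω, M' ω) |
          MeasurableSpace.comap (fun ω => (A ω, X ω)) inferInstance]) := hCI_exp.symm.indicator
      _ =ᵐ[P] s.indicator (P[fun ω => φ (X ω, M ω) |
          MeasurableSpace.comap (fun ω => (A ω, X ω)) inferInstance]) :=
        indicator_condExp_ae_eq_of_eqOn hs hφM' hφM fun ω hω => by rw [hcons ω hω]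
      _ =ᵐ[P] s.indicator (fun ω => h (X ω)) := by
        filter_upwards [hobs] with ω hω
        by_cases hωs : ω ∈ s
        · rw [Set.indicator_of_mem hωs, Set.indicator_of_mem hωs, hω hωs]
        · rw [Set.indicator_of_notMem hωs, Set.indicator_of_notMem hωs]
  have hZ : Z =ᵐ[P] fun ω => h (X ω) :=
    ae_eq_of_indicator_ae_eq_of_condExp_pos hX.comap_le (hA (measurableSet_singleton a'))
      stronglyMeasurable_condExp (hh.comp (comap_measurable X)).stronglyMeasurable h_on_s hpos
  calc ∫ ω, φ (X ω, M' ω) ∂P = ∫ ω, Z ω ∂P := (integral_condExp hX.comap_le).symm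
    _ = ∫ ω, h (X ω) ∂P := integral_congr_ae hZ
    _ = ∫ x, h x ∂(P.map X) := (integral_map hX.aemeasurable hh.aestronglyMeasurable).symm

theorem linear_sensitivity_identification_general
    {Ω 𝒳 : Type*} [MeasurableSpace Ω] [StandardBorelSpace Ω]
    [MeasurableSpace 𝒳]
    (P : Measure Ω) [IsProbabilityMeasure P]
    (X : Ω → 𝒳) (hX : Measurable X)
    (A : Ω → Fin 2) (hA : Measurable A)
    (M : Fin 2 → Ω → ℝ) (hM : ∀ i, Measurable (M i))
    (hMrange : ∀ i ω, M i ω ∈ Set.Icc (0 : ℝ) 1)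
    (Y : Fin 2 → ℝ → Ω → ℝ)
    -- r_y, a bounded jointly measurable version of E[Y | M = m, A = a, X = x]
    (r_y : ℝ → Fin 2 → 𝒳 → ℝ)
    (hr_meas : Measurable (fun p : ℝ × Fin 2 × 𝒳 => r_y p.1 p.2.1 p.2.2))
    (hr_bdd : ∃ C, ∀ m i x, |r_y m i x| ≤ C)
    -- f_M, a jointly measurable conditional density of the observed mediator
    -- given A = a, X = x with respect to a σ-finite measure ν_M on [0,1]
    (νM : Measure ℝ) [SigmaFinite νM]
    (f_M : ℝ → Fin 2 → 𝒳 → ℝ)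
    (hfM_meas : Measurable (fun p : ℝ × Fin 2 × 𝒳 => f_M p.1 p.2.1 p.2.2))
    (hfM : ∀ g : ℝ → 𝒳 → ℝ, Measurable (Function.uncurry g) →
      (∃ C, ∀ m x, |g m x| ≤ C) →
      (P[fun ω => g (M (A ω) ω) (X ω) |
          MeasurableSpace.comap (fun ω => (A ω, X ω)) inferInstance])
        =ᵐ[P] fun ω => ∫ m, g m (X ω) * f_M m (A ω) (X ω) ∂νM)
    (a a' : Fin 2) (l : ℝ)
    -- (i): SI2C, substituted form
    (hSI2C : P[fun ω => Y a (M a' ω) ω |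
        MeasurableSpace.comap (fun ω => (M 0 ω, M 1 ω, X ω)) inferInstance]
      =ᵐ[P] fun ω => r_y (M a' ω) a (X ω) + l * (M a ω - M a' ω))
    -- (ii): SI1, M(a') ⫫ A | X
    (hSI1 : CondIndepFun (MeasurableSpace.comap X inferInstance) hX.comap_le (M a') A P)
    -- (iv): SI3, P(A = a' | X) > 0 almost surely
    (hSI3 : ∀ᵐ ω ∂P, 0 < (P[fun ω' => if A ω' = a' then (1 : ℝ) else 0 |
        MeasurableSpace.comap X inferInstance]) ω) :
    ∫ ω, Y a (M a' ω) ω ∂P =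
      (∫ x, (∫ m, r_y m a x * f_M m a' x ∂νM) ∂(P.map X))
        + l * ((∫ ω, M a ω ∂P) - ∫ ω, M a' ω ∂P) := by
  obtain ⟨C, hC⟩ := hr_bdd
  have hφ : StronglyMeasurable fun p : 𝒳 × ℝ => r_y p.2 a p.1 :=
    (hr_meas.comp (measurable_snd.prodMk
      (measurable_const.prodMk measurable_fst))).stronglyMeasurable
  have hφ_int {N : Ω → ℝ} (hN : Measurable N) : Integrable (fun ω => r_y (N ω) a (X ω)) P :=
    .of_bound (hφ.measurable.comp (hX.prodMk hN)).aestronglyMeasurable C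
      (.of_forall fun ω => hC _ a _)
  have hM_int (i : Fin 2) : Integrable (M i) P :=
    .of_bound (hM i).aestronglyMeasurable 1 (.of_forall fun ω => by
      rw [Real.norm_of_nonneg (hMrange i ω).1]; exact (hMrange i ω).2)
  have hM_obs : Measurable fun ω => M (A ω) ω :=
    (measurable_from_prod_countable_right (f := fun p : Fin 2 × Ω => M p.1 p.2) hM).comp
      (hA.prodMk measurable_id)
  set h : 𝒳 → ℝ := fun x => ∫ m, r_y m a x * f_M m a' x ∂νM
  have hh : Measurable h :=
    (StronglyMeasurable.integral_prod_right' (ν := νM)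
      (f := fun p : 𝒳 × ℝ => r_y p.2 a p.1 * f_M p.2 a' p.1) (hφ.measurable.mul
        (hfM_meas.comp (measurable_snd.prodMk
          (measurable_const.prodMk measurable_fst)))).stronglyMeasurable).measurable
  have hobs : ∀ᵐ ω ∂P, A ω = a' → P[fun ω => r_y (M (A ω) ω) a (X ω) |
      MeasurableSpace.comap (fun ω => (A ω, X ω)) inferInstance] ω = h (X ω) := by
    filter_upwards [hfM (fun m x => r_y m a x) (hφ.measurable.comp measurable_swap)
      ⟨C, fun m x => hC m a x⟩] with ω hω hAω
    rw [hω, hAω]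
  have hpos : ∀ᵐ ω ∂P, 0 < P[(A ⁻¹' {a'}).indicator (fun _ => (1 : ℝ)) |
      MeasurableSpace.comap X inferInstance] ω := by
    have h_ind : (fun ω => if A ω = a' then (1 : ℝ) else 0)
        = (A ⁻¹' {a'}).indicator fun _ => 1 := by
      funext ω
      by_cases hω : A ω = a' <;> simp [hω]
    rwa [h_ind] at hSI3
  have hmediator : ∫ ω, r_y (M a' ω) a (X ω) ∂P = ∫ x, h x ∂(P.map X) :=
    integral_comp_eq_integral_map_of_condIndepFun hX hA (hM a') (fun ω hω => by rw [hω]) hSI1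
      hpos hφ (hφ_int hM_obs) (hφ_int (hM a')) hh hobs
  calc ∫ ω, Y a (M a' ω) ω ∂P = ∫ ω, r_y (M a' ω) a (X ω) + l * (M a ω - M a' ω) ∂P := by
        rw [← integral_condExp ((hM 0).prodMk ((hM 1).prodMk hX)).comap_le]
        exact integral_congr_ae hSI2C
    _ = _ := by
        rw [integral_add (g := fun ω => l * (M a ω - M a' ω)) (hφ_int (hM a'))
            (((hM_int a).sub (hM_int a')).const_mul l),
          integral_const_mul, integral_sub (hM_int a) (hM_int a'), hmediator]

/-- Proposition 2, linear-scale sensitivity identification.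
Under SI2C (substituted form), SI1, consistency (the observed mediator is
`ω ↦ M (A ω) ω`), and SI3, the mean of the counterfactual `Y{a, M(a')}` equals
the observed-data functional plus `λ (E[M(a)] − E[M(a')])`. -/
theorem linear_sensitivity_identification
    {Ω 𝒳 : Type*} [MeasurableSpace Ω] [StandardBorelSpace Ω]
    [MeasurableSpace 𝒳] [StandardBorelSpace 𝒳]
    (P : Measure Ω) [IsProbabilityMeasure P]
    (X : Ω → 𝒳) (hX : Measurable X)
    (A : Ω → Fin 2) (hA : Measurable A)
    (M : Fin 2 → Ω → ℝ) (hM : ∀ i, Measurable (M i))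
    (hMrange : ∀ i ω, M i ω ∈ Set.Icc (0 : ℝ) 1)
    (Y : Fin 2 → ℝ → Ω → ℝ)
    (hYmeas : ∀ i, Measurable (fun p : ℝ × Ω => Y i p.1 p.2))
    (hYrange : ∀ i m ω, Y i m ω ∈ Set.Icc (0 : ℝ) 1)
    -- r_y, a bounded jointly measurable version of E[Y | M = m, A = a, X = x]
    (r_y : ℝ → Fin 2 → 𝒳 → ℝ)
    (hr_meas : Measurable (fun p : ℝ × Fin 2 × 𝒳 => r_y p.1 p.2.1 p.2.2))
    (hr_bdd : ∃ C, ∀ m i x, |r_y m i x| ≤ C)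
    -- f_M, a jointly measurable conditional density of the observed mediator
    -- given A = a, X = x with respect to a σ-finite measure ν_M on [0,1]
    (νM : Measure ℝ) [SigmaFinite νM] (hνM : νM (Set.Icc (0 : ℝ) 1)ᶜ = 0)
    (f_M : ℝ → Fin 2 → 𝒳 → ℝ)
    (hfM_meas : Measurable (fun p : ℝ × Fin 2 × 𝒳 => f_M p.1 p.2.1 p.2.2))
    (hfM : ∀ g : ℝ → 𝒳 → ℝ, Measurable (Function.uncurry g) →
      (∃ C, ∀ m x, |g m x| ≤ C) →
      (P[fun ω => g (M (A ω) ω) (X ω) |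
          MeasurableSpace.comap (fun ω => (A ω, X ω)) inferInstance])
        =ᵐ[P] fun ω => ∫ m, g m (X ω) * f_M m (A ω) (X ω) ∂νM)
    (a a' : Fin 2) (l : ℝ)
    -- (i): SI2C, substituted form
    (hSI2C : P[fun ω => Y a (M a' ω) ω |
        MeasurableSpace.comap (fun ω => (M 0 ω, M 1 ω, X ω)) inferInstance]
      =ᵐ[P] fun ω => r_y (M a' ω) a (X ω) + l * (M a ω - M a' ω))
    -- (ii): SI1, M(a') ⫫ A | X
    (hSI1 : CondIndepFun (MeasurableSpace.comap X inferInstance) hX.comap_le (M a') A P)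
    -- (iv): SI3, P(A = a' | X) > 0 almost surely
    (hSI3 : ∀ᵐ ω ∂P, 0 < (P[fun ω' => if A ω' = a' then (1 : ℝ) else 0 |
        MeasurableSpace.comap X inferInstance]) ω) :
    ∫ ω, Y a (M a' ω) ω ∂P =
      (∫ x, (∫ m, r_y m a x * f_M m a' x ∂νM) ∂(P.map X))
        + l * ((∫ ω, M a ω ∂P) - ∫ ω, M a' ω ∂P) :=
  linear_sensitivity_identification_general P X hX A hA M hM hMrange Y r_y hr_meas hr_bdd νM f_M
    hfM_meas hfM a a' l hSI2C hSI1 hSI3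
end

section
/- Suppose that for every pair (a, a') ∈ {0,1}² the hypotheses of the linear-scale identification result hold, namely: E[ Y{a, M(a')} | M(0), M(1), X ] = r_y(M(a'), a, X) + λ( M(a) − M(a') ) almost surely, M(a') is conditionally independent of A given X, M = M(A), and P(A = a' | X) > 0 almost surely. Define ϖ = E[M(1)] − E[M(0)], δ₀(a) = ∫_𝒳 ∫_{[0,1]} r_y(m, a, x) ( f_M(m | 1, x) − f_M(m | 0, x) ) ν_M(dm) F_X(dx), and ζ₀(a) = ∫_𝒳 ∫_{[0,1]} ( r_y(m, 1, x) − r_y(m, 0, x) ) f_M(m | a, x) ν_M(dm) F_X(dx). Then for a ∈ {0,1}, δ(a) = δ₀(a) − λϖ and ζ(a) = ζ₀(a) + λϖ; consequently the average total effect satisfies τ = δ₀(1) + ζ₀(0), which does not depend on the sensitivity parameter λ. -/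
/-!
Conditioning on the covariates, the conditional independence of `M a'` and `A` factors
`E[g (M a', X) · 1{A = a'} | X]` as `E[g (M a', X) | X] · P(A = a' | X)`. On `{A = a'}` the
potential mediator `M a'` is the observed one, so the conditional density of the observed mediator
computes the same quantity as `(∫ g (m, X) f_M (m | a', X) dν_M) · P(A = a' | X)`. Positivity of
`P(A = a' | X)` cancels the common factor, which identifies `E[r_y (M a', a, X)]` as
`∫∫ r_y (m, a, x) f_M (m | a', x) dν_M dF_X`. By the linear sensitivity assumption,
`E[Y {a, M a'}]` is this plus `λ (E[M a] - E[M a'])`; the effects are differences of such terms,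
and in `τ` the two `λ`-terms cancel.
-/

open MeasureTheory ProbabilityTheory

section CondIndep

variable {Ω β β' γ : Type*} {mΩ : MeasurableSpace Ω} [StandardBorelSpace Ω]
  {μ : Measure Ω} [IsFiniteMeasure μ]
  [MeasurableSpace β] [StandardBorelSpace β] [Nonempty β]
  [MeasurableSpace β'] [StandardBorelSpace β'] [Nonempty β'] [MeasurableSpace γ]
  {f : Ω → β} {g : Ω → β'} {k : Ω → γ}

lemma condDistrib_prod_ae_eq_prod_of_condIndepFun (hf : Measurable f) (hg : Measurable g)
    (hk : Measurable k)
    (h : CondIndepFun (MeasurableSpace.comap k inferInstance) hk.comap_le f g μ) :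
    condDistrib (fun ω ↦ (f ω, g ω)) k μ =ᵐ[μ.map k] condDistrib f k μ ×ₖ condDistrib g k μ := by
  refine condDistrib_ae_eq_of_measure_eq_compProd k (hf.prodMk hg).aemeasurable ?_
  rw [Measure.compProd_eq_comp_prod]
  exact (condIndepFun_iff_map_prod_eq_prod_condDistrib_prod_condDistrib hf hg hk).1 h

lemma condExp_mul_ae_eq_of_condIndepFun (hf : Measurable f) (hg : Measurable g)
    (hk : Measurable k)
    (h : CondIndepFun (MeasurableSpace.comap k inferInstance) hk.comap_le f g μ)
    {φ : γ × β → ℝ} {ψ : β' → ℝ} (hφ : StronglyMeasurable φ) (hψ : StronglyMeasurable ψ)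
    (hφψ_int : Integrable (fun ω ↦ φ (k ω, f ω) * ψ (g ω)) μ)
    (hφ_int : Integrable (fun ω ↦ φ (k ω, f ω)) μ) (hψ_int : Integrable (fun ω ↦ ψ (g ω)) μ) :
    μ[fun ω ↦ φ (k ω, f ω) * ψ (g ω) | MeasurableSpace.comap k inferInstance] =ᵐ[μ]
      μ[fun ω ↦ φ (k ω, f ω) | MeasurableSpace.comap k inferInstance] *
        μ[fun ω ↦ ψ (g ω) | MeasurableSpace.comap k inferInstance] := by
  have hφψ : StronglyMeasurable fun p : γ × β × β' ↦ φ (p.1, p.2.1) * ψ p.2.2 :=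
    (hφ.comp_measurable (measurable_fst.prodMk measurable_snd.fst)).mul
      (hψ.comp_measurable measurable_snd.snd)
  filter_upwards
    [condExp_prod_ae_eq_integral_condDistrib hk (hf.prodMk hg).aemeasurable hφψ hφψ_int,
      condExp_prod_ae_eq_integral_condDistrib hk hf.aemeasurable hφ hφ_int,
      condExp_ae_eq_integral_condDistrib hk hg.aemeasurable hψ hψ_int,
      ae_of_ae_map hk.aemeasurable (condDistrib_prod_ae_eq_prod_of_condIndepFun hf hg hk h)]
    with ω hφψω hφω hψω hprod
  rw [Pi.mul_apply, hφψω, hφω, hψω, hprod, Kernel.prod_apply]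
  exact integral_prod_mul (fun y ↦ φ (k ω, y)) ψ

end CondIndep

section CondExp

variable {Ω 𝒳 : Type*} {m mΩ : MeasurableSpace Ω} [MeasurableSpace 𝒳] {μ : Measure Ω}

lemma ae_of_ae_imp_of_condExp_pos [IsFiniteMeasure μ] (hm : m ≤ mΩ) {χ : Ω → ℝ}
    (hχ : Integrable χ μ) {p : Ω → Prop} (hp : MeasurableSet[m] {ω | ¬p ω})
    (hχp : ∀ᵐ ω ∂μ, ¬p ω → χ ω = 0)
    (hpos : ∀ᵐ ω ∂μ, 0 < μ[χ|m] ω) : ∀ᵐ ω ∂μ, p ω := by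
  have hzero : ∫ ω in {ω | ¬p ω}, μ[χ|m] ω ∂μ = 0 := by
    rw [setIntegral_condExp hm hχ hp]
    exact setIntegral_eq_zero_of_ae_eq_zero hχp
  rw [integral_eq_zero_iff_of_nonneg_ae (ae_restrict_of_ae (hpos.mono fun _ h ↦ h.le))
    integrable_condExp.integrableOn] at hzero
  have hfalse : ∀ᵐ ω ∂μ.restrict {ω | ¬p ω}, False := by
    filter_upwards [hzero, ae_restrict_of_ae hpos] with ω h0 hω
    exact hω.ne' h0
  rw [ae_iff, Measure.restrict_apply' (hm _ hp)] at hfalse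
  simpa [ae_iff] using hfalse

lemma integral_eq_integral_map_of_condExp_ae_eq [IsFiniteMeasure μ] {X : Ω → 𝒳}
    (hX : Measurable X) {F : Ω → ℝ} {φ : 𝒳 → ℝ} (hφ : Measurable φ)
    (h : μ[F | MeasurableSpace.comap X inferInstance] =ᵐ[μ] fun ω ↦ φ (X ω)) :
    ∫ ω, F ω ∂μ = ∫ x, φ x ∂μ.map X := by
  rw [← integral_condExp hX.comap_le, integral_congr_ae h,
    integral_map hX.aemeasurable hφ.aestronglyMeasurable]

lemma integrable_map_of_condExp_ae_eq {X : Ω → 𝒳} (hX : Measurable X) {F : Ω → ℝ}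
    {φ : 𝒳 → ℝ} (hφ : Measurable φ)
    (h : μ[F | MeasurableSpace.comap X inferInstance] =ᵐ[μ] fun ω ↦ φ (X ω)) :
    Integrable φ (μ.map X) :=
  (integrable_map_measure hφ.aestronglyMeasurable hX.aemeasurable).2 (integrable_condExp.congr h)

lemma integrable_ite_eq [IsFiniteMeasure μ] {T : Type*} [MeasurableSpace T]
    [MeasurableSingletonClass T] [DecidableEq T] {A : Ω → T} (hA : Measurable A) (a : T) :
    Integrable (fun ω ↦ if A ω = a then (1 : ℝ) else 0) μ :=
  Integrable.of_bound
    (measurable_const.ite (hA (measurableSet_singleton a)) measurable_const).aestronglyMeasurable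
    1 (ae_of_all _ fun ω ↦ by split_ifs <;> simp)

end CondExp

lemma integral_integral_sub {α β : Type*} [MeasurableSpace α] [MeasurableSpace β]
    {μ : Measure α} {ν : Measure β} {F G : α → β → ℝ} (hF : ∀ᵐ x ∂μ, Integrable (F x) ν)
    (hG : ∀ᵐ x ∂μ, Integrable (G x) ν) (hF' : Integrable (fun x ↦ ∫ y, F x y ∂ν) μ)
    (hG' : Integrable (fun x ↦ ∫ y, G x y ∂ν) μ) :
    ∫ x, ∫ y, F x y - G x y ∂ν ∂μ = ∫ x, ∫ y, F x y ∂ν ∂μ - ∫ x, ∫ y, G x y ∂ν ∂μ := by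
  rw [← integral_sub hF' hG']
  refine integral_congr_ae ?_
  filter_upwards [hF, hG] with x hFx hGx
  exact integral_sub hFx hGx

def IsCondDensity {Ω 𝒳 𝓜 T : Type*} {mΩ : MeasurableSpace Ω} [MeasurableSpace 𝒳]
    [MeasurableSpace 𝓜] [MeasurableSpace T] (P : Measure Ω) (Z : Ω → 𝓜) (A : Ω → T)
    (X : Ω → 𝒳) (ν : Measure 𝓜) (f : 𝓜 → T → 𝒳 → ℝ) : Prop :=
  ∀ g : 𝓜 → 𝒳 → ℝ, Measurable (Function.uncurry g) → (∃ C, ∀ m x, |g m x| ≤ C) →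
    P[fun ω ↦ g (Z ω) (X ω) | MeasurableSpace.comap (fun ω ↦ (A ω, X ω)) inferInstance]
      =ᵐ[P] fun ω ↦ ∫ m, g m (X ω) * f m (A ω) (X ω) ∂ν

section Mediation

variable {Ω 𝒳 𝓜 : Type*} {mΩ : MeasurableSpace Ω} [MeasurableSpace 𝒳] [MeasurableSpace 𝓜]
  {P : Measure Ω} [IsFiniteMeasure P] {X : Ω → 𝒳} {A : Ω → Fin 2} {M : Fin 2 → Ω → 𝓜}
  {νM : Measure 𝓜} {f_M : 𝓜 → Fin 2 → 𝒳 → ℝ}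

lemma IsCondDensity.ae_integral_eq_one {T : Type*} [MeasurableSpace T] {Z : Ω → 𝓜}
    {A : Ω → T} {f : 𝓜 → T → 𝒳 → ℝ} (hf : IsCondDensity P Z A X νM f)
    (hAX : Measurable fun ω ↦ (A ω, X ω)) :
    ∀ᵐ ω ∂P, ∫ m, f m (A ω) (X ω) ∂νM = 1 := by
  have h := hf (fun _ _ ↦ 1) measurable_const ⟨1, by simp⟩
  rw [condExp_const hAX.comap_le] at h
  filter_upwards [h] with ω hω
  simpa using hω.symm

lemma measurable_observed (hA : Measurable A) (hM : ∀ i, Measurable (M i)) :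
    Measurable fun ω ↦ M (A ω) ω :=
  (measurable_from_prod_countable_right (f := fun p : Fin 2 × Ω ↦ M p.1 p.2) hM).comp
    (hA.prodMk measurable_id)

lemma measurable_uncurry_density {a : Fin 2}
    (hf_meas : Measurable fun p : 𝓜 × Fin 2 × 𝒳 ↦ f_M p.1 p.2.1 p.2.2) :
    Measurable (Function.uncurry fun x m ↦ f_M m a x) :=
  hf_meas.comp (measurable_snd.prodMk (measurable_const.prodMk measurable_fst))

lemma measurable_integral_mul_density [SFinite νM] {a : Fin 2} {g : 𝓜 → 𝒳 → ℝ}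
    (hg : Measurable (Function.uncurry g))
    (hf_meas : Measurable fun p : 𝓜 × Fin 2 × 𝒳 ↦ f_M p.1 p.2.1 p.2.2) :
    Measurable fun x ↦ ∫ m, g m x * f_M m a x ∂νM :=
  ((hg.comp measurable_swap).mul (measurable_uncurry_density hf_meas)).stronglyMeasurable
    |>.integral_prod_right' |>.measurable

/-- The density integrates to one at the observed treatment, which is `a'` with positive
conditional probability given `X`. -/
lemma ae_integrable_density [SFinite νM] {Z : Ω → 𝓜} (hX : Measurable X) (hA : Measurable A)
    (hf_meas : Measurable fun p : 𝓜 × Fin 2 × 𝒳 ↦ f_M p.1 p.2.1 p.2.2)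
    (hf : IsCondDensity P Z A X νM f_M) {a' : Fin 2}
    (hpos : ∀ᵐ ω ∂P, 0 < (P[fun ω' ↦ if A ω' = a' then (1 : ℝ) else 0 |
      MeasurableSpace.comap X inferInstance]) ω) :
    ∀ᵐ x ∂P.map X, Integrable (fun m ↦ f_M m a' x) νM := by
  have hS := measurableSet_integrable (μ := νM)
    (measurable_uncurry_density (a := a') hf_meas).stronglyMeasurable
  rw [ae_map_iff hX.aemeasurable hS]
  refine ae_of_ae_imp_of_condExp_pos hX.comap_le (integrable_ite_eq hA a') ⟨_, hS.compl, rfl⟩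
    ?_ hpos
  filter_upwards [hf.ae_integral_eq_one (hA.prodMk hX)] with ω hω hnot
  rw [if_neg]
  rintro rfl
  exact hnot (.of_integral_ne_zero (by simp [hω]))

lemma ae_integrable_mul_density [SFinite νM] {Z : Ω → 𝓜} (hX : Measurable X)
    (hA : Measurable A) (hf_meas : Measurable fun p : 𝓜 × Fin 2 × 𝒳 ↦ f_M p.1 p.2.1 p.2.2)
    (hf : IsCondDensity P Z A X νM f_M) {g : 𝓜 → 𝒳 → ℝ} (hg : Measurable (Function.uncurry g))
    {C : ℝ} (hgC : ∀ m x, |g m x| ≤ C) {a' : Fin 2}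
    (hpos : ∀ᵐ ω ∂P, 0 < (P[fun ω' ↦ if A ω' = a' then (1 : ℝ) else 0 |
      MeasurableSpace.comap X inferInstance]) ω) :
    ∀ᵐ x ∂P.map X, Integrable (fun m ↦ g m x * f_M m a' x) νM := by
  filter_upwards [ae_integrable_density hX hA hf_meas hf hpos] with x hx
  exact hx.bdd_mul (hg.comp (measurable_id.prodMk measurable_const)).aestronglyMeasurable
    (ae_of_all _ fun m ↦ hgC m x)

lemma IsCondDensity.condExp_mul_ite_ae_eq [SFinite νM] (hX : Measurable X) (hA : Measurable A)
    (hM : ∀ i, Measurable (M i))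
    (hf_meas : Measurable fun p : 𝓜 × Fin 2 × 𝒳 ↦ f_M p.1 p.2.1 p.2.2)
    (hf : IsCondDensity P (fun ω ↦ M (A ω) ω) A X νM f_M) {g : 𝓜 → 𝒳 → ℝ}
    (hg : Measurable (Function.uncurry g)) {C : ℝ} (hgC : ∀ m x, |g m x| ≤ C) (a' : Fin 2) :
    P[fun ω ↦ g (M a' ω) (X ω) * (if A ω = a' then (1 : ℝ) else 0) |
        MeasurableSpace.comap X inferInstance]
      =ᵐ[P] fun ω ↦ (∫ m, g m (X ω) * f_M m a' (X ω) ∂νM) *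
        (P[fun ω' ↦ if A ω' = a' then (1 : ℝ) else 0 |
          MeasurableSpace.comap X inferInstance]) ω := by
  set χ : Ω → ℝ := fun ω ↦ if A ω = a' then 1 else 0
  set u : 𝒳 → ℝ := fun x ↦ ∫ m, g m x * f_M m a' x ∂νM
  have hAX := comap_measurable (m := inferInstance) fun ω ↦ (A ω, X ω)
  have hχ_AX : StronglyMeasurable[MeasurableSpace.comap (fun ω ↦ (A ω, X ω)) inferInstance] χ :=
    (measurable_const.ite (measurable_fst (measurableSet_singleton a')) measurable_const
      |>.comp hAX).stronglyMeasurable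
  have hobs_int : Integrable (fun ω ↦ g (M (A ω) ω) (X ω)) P :=
    .of_bound (hg.comp ((measurable_observed hA hM).prodMk hX)).aestronglyMeasurable C
      (ae_of_all _ fun ω ↦ hgC _ _)
  -- consistency: on `{A = a'}` the observed mediator is `M a'`
  have hobs : (fun ω ↦ g (M a' ω) (X ω) * χ ω) = χ * fun ω ↦ g (M (A ω) ω) (X ω) := by
    funext ω
    by_cases h : A ω = a' <;> simp [χ, h]
  have hinner : P[χ * fun ω ↦ g (M (A ω) ω) (X ω) |
      MeasurableSpace.comap (fun ω ↦ (A ω, X ω)) inferInstance] =ᵐ[P] (u ∘ X) * χ := by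
    refine (condExp_mul_of_stronglyMeasurable_left hχ_AX ?_ hobs_int).trans ?_
    · exact hobs ▸ (integrable_ite_eq hA a').bdd_mul
        (hg.comp ((hM a').prodMk hX)).aestronglyMeasurable (ae_of_all _ fun ω ↦ hgC _ _)
    · filter_upwards [hf g hg ⟨C, hgC⟩] with ω hω
      by_cases h : A ω = a' <;> simp [χ, u, h, hω, mul_comm]
  calc P[fun ω ↦ g (M a' ω) (X ω) * χ ω | MeasurableSpace.comap X inferInstance]
      =ᵐ[P] P[(u ∘ X) * χ | MeasurableSpace.comap X inferInstance] := by
        rw [hobs]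
        exact (condExp_condExp_of_le (measurable_snd.comp hAX).comap_le
          (hA.prodMk hX).comap_le).symm.trans (condExp_congr_ae hinner)
    _ =ᵐ[P] (u ∘ X) * P[χ | MeasurableSpace.comap X inferInstance] :=
        condExp_mul_of_stronglyMeasurable_left
          ((measurable_integral_mul_density hg hf_meas).comp
            (comap_measurable X)).stronglyMeasurable
          (integrable_condExp.congr hinner) (integrable_ite_eq hA a')

lemma IsCondDensity.condExp_potentialMediator_ae_eq [StandardBorelSpace Ω]
    [StandardBorelSpace 𝓜] [Nonempty 𝓜] [SFinite νM] (hX : Measurable X) (hA : Measurable A)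
    (hM : ∀ i, Measurable (M i))
    (hf_meas : Measurable fun p : 𝓜 × Fin 2 × 𝒳 ↦ f_M p.1 p.2.1 p.2.2)
    (hf : IsCondDensity P (fun ω ↦ M (A ω) ω) A X νM f_M) {g : 𝓜 → 𝒳 → ℝ}
    (hg : Measurable (Function.uncurry g)) {C : ℝ} (hgC : ∀ m x, |g m x| ≤ C) {a' : Fin 2}
    (hCI : CondIndepFun (MeasurableSpace.comap X inferInstance) hX.comap_le (M a') A P)
    (hpos : ∀ᵐ ω ∂P, 0 < (P[fun ω' ↦ if A ω' = a' then (1 : ℝ) else 0 |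
      MeasurableSpace.comap X inferInstance]) ω) :
    P[fun ω ↦ g (M a' ω) (X ω) | MeasurableSpace.comap X inferInstance]
      =ᵐ[P] fun ω ↦ ∫ m, g m (X ω) * f_M m a' (X ω) ∂νM := by
  have hgX : Measurable fun ω ↦ g (M a' ω) (X ω) := hg.comp ((hM a').prodMk hX)
  have hχ : Measurable fun i : Fin 2 ↦ if i = a' then (1 : ℝ) else 0 := measurable_of_finite _
  have hfactor := condExp_mul_ae_eq_of_condIndepFun (hM a') hA hX hCI
    (hg.comp measurable_swap).stronglyMeasurable hχ.stronglyMeasurable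
    ((integrable_ite_eq hA a').bdd_mul hgX.aestronglyMeasurable (ae_of_all _ fun ω ↦ hgC _ _))
    (.of_bound hgX.aestronglyMeasurable C (ae_of_all _ fun ω ↦ hgC _ _))
    (integrable_ite_eq hA a')
  filter_upwards [hfactor, hf.condExp_mul_ite_ae_eq hX hA hM hf_meas hg hgC a', hpos]
    with ω hfactorω hdensω hposω
  exact mul_right_cancel₀ hposω.ne' (hfactorω.symm.trans hdensω)

end Mediation

section LinearScale

variable {Ω 𝒳 : Type*} {m mΩ : MeasurableSpace Ω} [StandardBorelSpace Ω] [MeasurableSpace 𝒳]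
  {P : Measure Ω} [IsFiniteMeasure P] {X : Ω → 𝒳} {A : Ω → Fin 2} {M : Fin 2 → Ω → ℝ}
  {νM : Measure ℝ} [SFinite νM] {f_M : ℝ → Fin 2 → 𝒳 → ℝ}

lemma IsCondDensity.integral_potentialOutcome_eq_of_linear (hX : Measurable X)
    (hA : Measurable A) (hM : ∀ i, Measurable (M i)) (hM_int : ∀ i, Integrable (M i) P)
    (hf_meas : Measurable fun p : ℝ × Fin 2 × 𝒳 ↦ f_M p.1 p.2.1 p.2.2)
    (hf : IsCondDensity P (fun ω ↦ M (A ω) ω) A X νM f_M) {r : ℝ → 𝒳 → ℝ}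
    (hr : Measurable (Function.uncurry r)) {C : ℝ} (hrC : ∀ m x, |r m x| ≤ C)
    {Y : ℝ → Ω → ℝ} (hm : m ≤ mΩ) {l : ℝ} {a a' : Fin 2}
    (hY : P[fun ω ↦ Y (M a' ω) ω | m] =ᵐ[P] fun ω ↦ r (M a' ω) (X ω) + l * (M a ω - M a' ω))
    (hCI : CondIndepFun (MeasurableSpace.comap X inferInstance) hX.comap_le (M a') A P)
    (hpos : ∀ᵐ ω ∂P, 0 < (P[fun ω' ↦ if A ω' = a' then (1 : ℝ) else 0 |
      MeasurableSpace.comap X inferInstance]) ω) :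
    ∫ ω, Y (M a' ω) ω ∂P = (∫ x, ∫ m, r m x * f_M m a' x ∂νM ∂P.map X)
      + l * ((∫ ω, M a ω ∂P) - ∫ ω, M a' ω ∂P) := by
  have hr_int : Integrable (fun ω ↦ r (M a' ω) (X ω)) P :=
    .of_bound (hr.comp ((hM a').prodMk hX)).aestronglyMeasurable C (ae_of_all _ fun ω ↦ hrC _ _)
  have hlin : Integrable (fun ω ↦ l * (M a ω - M a' ω)) P :=
    ((hM_int a).sub (hM_int a')).const_mul l
  rw [← integral_condExp hm, integral_congr_ae hY, integral_add hr_int hlin, integral_const_mul,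
    integral_sub (hM_int a) (hM_int a'), integral_eq_integral_map_of_condExp_ae_eq hX
      (measurable_integral_mul_density hr hf_meas)
      (hf.condExp_potentialMediator_ae_eq hX hA hM hf_meas hr hrC hCI hpos)]

end LinearScale

theorem linear_sensitivity_effect_decomposition_general
    {Ω 𝒳 : Type*} [MeasurableSpace Ω] [StandardBorelSpace Ω]
    [MeasurableSpace 𝒳]
    (P : Measure Ω) [IsProbabilityMeasure P]
    (X : Ω → 𝒳) (hX : Measurable X)
    (A : Ω → Fin 2) (hA : Measurable A)
    (M : Fin 2 → Ω → ℝ) (hM : ∀ i, Measurable (M i))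
    (hMrange : ∀ i ω, M i ω ∈ Set.Icc (0 : ℝ) 1)
    (Y : Fin 2 → ℝ → Ω → ℝ)
    (hYmeas : ∀ i, Measurable (fun p : ℝ × Ω => Y i p.1 p.2))
    (hYrange : ∀ i m ω, Y i m ω ∈ Set.Icc (0 : ℝ) 1)
    -- r_y, a bounded jointly measurable version of E[Y | M = m, A = a, X = x]
    (r_y : ℝ → Fin 2 → 𝒳 → ℝ)
    (hr_meas : Measurable (fun p : ℝ × Fin 2 × 𝒳 => r_y p.1 p.2.1 p.2.2))
    (hr_bdd : ∃ C, ∀ m i x, |r_y m i x| ≤ C)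
    -- f_M, a jointly measurable conditional density of the observed mediator
    -- given A = a, X = x with respect to a σ-finite measure ν_M on [0,1]
    (νM : Measure ℝ) [SigmaFinite νM]
    (f_M : ℝ → Fin 2 → 𝒳 → ℝ)
    (hfM_meas : Measurable (fun p : ℝ × Fin 2 × 𝒳 => f_M p.1 p.2.1 p.2.2))
    (hfM : ∀ g : ℝ → 𝒳 → ℝ, Measurable (Function.uncurry g) →
      (∃ C, ∀ m x, |g m x| ≤ C) →
      (P[fun ω => g (M (A ω) ω) (X ω) |
          MeasurableSpace.comap (fun ω => (A ω, X ω)) inferInstance])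
        =ᵐ[P] fun ω => ∫ m, g m (X ω) * f_M m (A ω) (X ω) ∂νM)
    (l : ℝ)
    -- SI2C, substituted form, for every pair (a, a')
    (hSI2C : ∀ a a' : Fin 2,
      P[fun ω => Y a (M a' ω) ω |
          MeasurableSpace.comap (fun ω => (M 0 ω, M 1 ω, X ω)) inferInstance]
        =ᵐ[P] fun ω => r_y (M a' ω) a (X ω) + l * (M a ω - M a' ω))
    -- SI1 for every a'
    (hSI1 : ∀ a' : Fin 2,
      CondIndepFun (MeasurableSpace.comap X inferInstance) hX.comap_le (M a') A P)
    -- SI3 for every a'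
    (hSI3 : ∀ a' : Fin 2, ∀ᵐ ω ∂P, 0 < (P[fun ω' => if A ω' = a' then (1 : ℝ) else 0 |
        MeasurableSpace.comap X inferInstance]) ω) :
    (∀ a : Fin 2,
      -- δ(a) = δ₀(a) − λϖ
      (∫ ω, (Y a (M 1 ω) ω - Y a (M 0 ω) ω) ∂P) =
        (∫ x, (∫ m, r_y m a x * (f_M m 1 x - f_M m 0 x) ∂νM) ∂(P.map X))
          - l * ((∫ ω, M 1 ω ∂P) - ∫ ω, M 0 ω ∂P) ∧
      -- ζ(a) = ζ₀(a) + λϖ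
      (∫ ω, (Y 1 (M a ω) ω - Y 0 (M a ω) ω) ∂P) =
        (∫ x, (∫ m, (r_y m 1 x - r_y m 0 x) * f_M m a x ∂νM) ∂(P.map X))
          + l * ((∫ ω, M 1 ω ∂P) - ∫ ω, M 0 ω ∂P)) ∧
    -- τ = δ₀(1) + ζ₀(0), free of λ
    (∫ ω, (Y 1 (M 1 ω) ω - Y 0 (M 0 ω) ω) ∂P) =
      (∫ x, (∫ m, r_y m 1 x * (f_M m 1 x - f_M m 0 x) ∂νM) ∂(P.map X))
        + (∫ x, (∫ m, (r_y m 1 x - r_y m 0 x) * f_M m 0 x ∂νM) ∂(P.map X)) := by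
  have hf : IsCondDensity P (fun ω ↦ M (A ω) ω) A X νM f_M := hfM
  obtain ⟨C, hC⟩ := hr_bdd
  have hr : ∀ a, Measurable (Function.uncurry fun m x ↦ r_y m a x) := fun a ↦
    hr_meas.comp (measurable_fst.prodMk (measurable_const.prodMk measurable_snd))
  have hrC : ∀ a m x, |r_y m a x| ≤ C := fun a m x ↦ hC m a x
  have hM_int : ∀ i, Integrable (M i) P := fun i ↦
    .of_mem_Icc 0 1 (hM i).aemeasurable (ae_of_all _ (hMrange i))
  have hY_int : ∀ a a', Integrable (fun ω ↦ Y a (M a' ω) ω) P := fun a a' ↦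
    .of_mem_Icc 0 1 ((hYmeas a).comp ((hM a').prodMk measurable_id)).aemeasurable
      (ae_of_all _ fun ω ↦ hYrange _ _ _)
  have hI := fun a a' ↦ hf.integral_potentialOutcome_eq_of_linear hX hA hM hM_int hfM_meas (hr a)
    (hrC a) ((hM 0).prodMk ((hM 1).prodMk hX)).comap_le (hSI2C a a') (hSI1 a') (hSI3 a')
  have hint := fun a a' ↦ ae_integrable_mul_density hX hA hfM_meas hf (hr a) (hrC a) (hSI3 a')
  have hφint := fun a a' ↦ integrable_map_of_condExp_ae_eq hX
    (measurable_integral_mul_density (hr a) hfM_meas)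
    (hf.condExp_potentialMediator_ae_eq hX hA hM hfM_meas (hr a) (hrC a) (hSI1 a') (hSI3 a'))
  have hδ : ∀ a, ∫ x, ∫ m, r_y m a x * (f_M m 1 x - f_M m 0 x) ∂νM ∂P.map X
      = (∫ x, ∫ m, r_y m a x * f_M m 1 x ∂νM ∂P.map X)
        - ∫ x, ∫ m, r_y m a x * f_M m 0 x ∂νM ∂P.map X := fun a ↦ by
    simp_rw [mul_sub]
    exact integral_integral_sub (hint a 1) (hint a 0) (hφint a 1) (hφint a 0)
  have hζ : ∀ a, ∫ x, ∫ m, (r_y m 1 x - r_y m 0 x) * f_M m a x ∂νM ∂P.map X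
      = (∫ x, ∫ m, r_y m 1 x * f_M m a x ∂νM ∂P.map X)
        - ∫ x, ∫ m, r_y m 0 x * f_M m a x ∂νM ∂P.map X := fun a ↦ by
    simp_rw [sub_mul]
    exact integral_integral_sub (hint 1 a) (hint 0 a) (hφint 1 a) (hφint 0 a)
  refine ⟨fun a ↦ ⟨?_, ?_⟩, ?_⟩
  · rw [integral_sub (hY_int a 1) (hY_int a 0), hI a 1, hI a 0, hδ a]; ring
  · rw [integral_sub (hY_int 1 a) (hY_int 0 a), hI 1 a, hI 0 a, hζ a]; ring
  · rw [integral_sub (hY_int 1 1) (hY_int 0 0), hI 1 1, hI 0 0, hδ 1, hζ 0]; ring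

/-- sensitivity decomposition of the mediation effects on the
linear scale. Under the hypotheses of the linear-scale identification result
for every pair `(a, a')`, the average mediation effects satisfy
`δ(a) = δ₀(a) − λϖ` and `ζ(a) = ζ₀(a) + λϖ`, and consequently the average
total effect `τ = δ₀(1) + ζ₀(0)` does not depend on `λ`. -/
theorem linear_sensitivity_effect_decomposition
    {Ω 𝒳 : Type*} [MeasurableSpace Ω] [StandardBorelSpace Ω]
    [MeasurableSpace 𝒳] [StandardBorelSpace 𝒳]
    (P : Measure Ω) [IsProbabilityMeasure P]
    (X : Ω → 𝒳) (hX : Measurable X)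
    (A : Ω → Fin 2) (hA : Measurable A)
    (M : Fin 2 → Ω → ℝ) (hM : ∀ i, Measurable (M i))
    (hMrange : ∀ i ω, M i ω ∈ Set.Icc (0 : ℝ) 1)
    (Y : Fin 2 → ℝ → Ω → ℝ)
    (hYmeas : ∀ i, Measurable (fun p : ℝ × Ω => Y i p.1 p.2))
    (hYrange : ∀ i m ω, Y i m ω ∈ Set.Icc (0 : ℝ) 1)
    -- r_y, a bounded jointly measurable version of E[Y | M = m, A = a, X = x]
    (r_y : ℝ → Fin 2 → 𝒳 → ℝ)
    (hr_meas : Measurable (fun p : ℝ × Fin 2 × 𝒳 => r_y p.1 p.2.1 p.2.2))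
    (hr_bdd : ∃ C, ∀ m i x, |r_y m i x| ≤ C)
    -- f_M, a jointly measurable conditional density of the observed mediator
    -- given A = a, X = x with respect to a σ-finite measure ν_M on [0,1]
    (νM : Measure ℝ) [SigmaFinite νM] (hνM : νM (Set.Icc (0 : ℝ) 1)ᶜ = 0)
    (f_M : ℝ → Fin 2 → 𝒳 → ℝ)
    (hfM_meas : Measurable (fun p : ℝ × Fin 2 × 𝒳 => f_M p.1 p.2.1 p.2.2))
    (hfM : ∀ g : ℝ → 𝒳 → ℝ, Measurable (Function.uncurry g) →
      (∃ C, ∀ m x, |g m x| ≤ C) →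
      (P[fun ω => g (M (A ω) ω) (X ω) |
          MeasurableSpace.comap (fun ω => (A ω, X ω)) inferInstance])
        =ᵐ[P] fun ω => ∫ m, g m (X ω) * f_M m (A ω) (X ω) ∂νM)
    (l : ℝ)
    -- SI2C, substituted form, for every pair (a, a')
    (hSI2C : ∀ a a' : Fin 2,
      P[fun ω => Y a (M a' ω) ω |
          MeasurableSpace.comap (fun ω => (M 0 ω, M 1 ω, X ω)) inferInstance]
        =ᵐ[P] fun ω => r_y (M a' ω) a (X ω) + l * (M a ω - M a' ω))
    -- SI1 for every a'
    (hSI1 : ∀ a' : Fin 2,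
      CondIndepFun (MeasurableSpace.comap X inferInstance) hX.comap_le (M a') A P)
    -- SI3 for every a'
    (hSI3 : ∀ a' : Fin 2, ∀ᵐ ω ∂P, 0 < (P[fun ω' => if A ω' = a' then (1 : ℝ) else 0 |
        MeasurableSpace.comap X inferInstance]) ω) :
    (∀ a : Fin 2,
      -- δ(a) = δ₀(a) − λϖ
      (∫ ω, (Y a (M 1 ω) ω - Y a (M 0 ω) ω) ∂P) =
        (∫ x, (∫ m, r_y m a x * (f_M m 1 x - f_M m 0 x) ∂νM) ∂(P.map X))
          - l * ((∫ ω, M 1 ω ∂P) - ∫ ω, M 0 ω ∂P) ∧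
      -- ζ(a) = ζ₀(a) + λϖ
      (∫ ω, (Y 1 (M a ω) ω - Y 0 (M a ω) ω) ∂P) =
        (∫ x, (∫ m, (r_y m 1 x - r_y m 0 x) * f_M m a x ∂νM) ∂(P.map X))
          + l * ((∫ ω, M 1 ω ∂P) - ∫ ω, M 0 ω ∂P)) ∧
    -- τ = δ₀(1) + ζ₀(0), free of λ
    (∫ ω, (Y 1 (M 1 ω) ω - Y 0 (M 0 ω) ω) ∂P) =
      (∫ x, (∫ m, r_y m 1 x * (f_M m 1 x - f_M m 0 x) ∂νM) ∂(P.map X))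
        + (∫ x, (∫ m, (r_y m 1 x - r_y m 0 x) * f_M m 0 x ∂νM) ∂(P.map X)) :=
  linear_sensitivity_effect_decomposition_general P X hX A hA M hM hMrange Y hYmeas hYrange r_y
    hr_meas hr_bdd νM f_M hfM_meas hfM l hSI2C hSI1 hSI3
end
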